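/- arXiv:2112.07424 — 4 statements merged into one kernel-verified Lean document; each statement's English description precedes it below -/
import Mathlib

section
/- Let M = (S, A, R, ρ) be a finite MDP with discount factor γ ∈ (0,1). Let η be a distributional collection with finite first moments and let a* : S → A be any greedy selection for η. Then every measure (T*η)^{(s,a)} is a Borel probability measure on ℝ with finite first moment, and its induced Q-function satisfies Q_{T*η}(s,a) = Σ_{(r,s') ∈ R×S} ρ(r,s'|s,a)·(r + γ·max_{a'∈A} Q_η(s',a')) = (𝒯* Q_η)(s,a) for all (s,a) ∈ S×A. -/
/-!
`(T*η)^{(s,a)}` is a finite mixture, with weights `ρ(r,s'|s,a)`, of the pushforwards of the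
probability measures `η^{(s',a*(s'))}` under the affine maps `z ↦ r + γz`. Mass and mean are
linear in the mixture, the mean transforms affinely under the pushforward, and the greedy
selection turns `Q_η(s', a*(s'))` into `max_{a'} Q_η(s',a')`.
-/

open MeasureTheory

section Mixture

variable {ι α : Type*} [MeasurableSpace α] (s : Finset ι) (w : ι → ℝ) (μ : ι → Measure α)

lemma isProbabilityMeasure_finsetSum_ofReal_smul [∀ i, IsProbabilityMeasure (μ i)]
    (hw : ∀ i ∈ s, 0 ≤ w i) (hw_sum : ∑ i ∈ s, w i = 1) :
    IsProbabilityMeasure (∑ i ∈ s, ENNReal.ofReal (w i) • μ i) := by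
  constructor
  simp only [Measure.finsetSum_apply, Measure.smul_apply, measure_univ, smul_eq_mul, mul_one]
  rw [← ENNReal.ofReal_sum_of_nonneg hw, hw_sum, ENNReal.ofReal_one]

variable {E : Type*} [NormedAddCommGroup E] {f : α → E}

lemma integrable_finsetSum_ofReal_smul (hf : ∀ i ∈ s, Integrable f (μ i)) :
    Integrable f (∑ i ∈ s, ENNReal.ofReal (w i) • μ i) :=
  integrable_finsetSum_measure.mpr fun i hi => (hf i hi).smul_measure ENNReal.ofReal_ne_top

lemma integral_finsetSum_ofReal_smul [NormedSpace ℝ E] (hw : ∀ i ∈ s, 0 ≤ w i)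
    (hf : ∀ i ∈ s, Integrable f (μ i)) :
    ∫ x, f x ∂(∑ i ∈ s, ENNReal.ofReal (w i) • μ i) = ∑ i ∈ s, w i • ∫ x, f x ∂μ i := by
  rw [integral_finsetSum_measure fun i hi => (hf i hi).smul_measure ENNReal.ofReal_ne_top]
  refine Finset.sum_congr rfl fun i hi => ?_
  rw [integral_smul_measure, ENNReal.toReal_ofReal (hw i hi)]

end Mixture

section AffinePushforward

variable (μ : Measure ℝ) (r γ : ℝ)

lemma integrable_id_map_affine [IsFiniteMeasure μ] (hμ : Integrable (fun z : ℝ => z) μ) :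
    Integrable (fun z : ℝ => z) (μ.map fun z => r + γ * z) := by
  rw [integrable_map_measure (by fun_prop) (by fun_prop)]
  exact (integrable_const r).add (hμ.const_mul γ)

lemma integral_id_map_affine [IsProbabilityMeasure μ] (hμ : Integrable (fun z : ℝ => z) μ) :
    ∫ z, z ∂(μ.map fun z => r + γ * z) = r + γ * ∫ z, z ∂μ := by
  rw [integral_map (by fun_prop) (by fun_prop),
    integral_add (integrable_const r) (hμ.const_mul γ), integral_const, integral_const_mul]
  simp

end AffinePushforward

theorem induced_Q_of_distributional_optimality_operator_general
    {S A : Type} [Fintype S] [Fintype A] [Nonempty A]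
    (R : Finset ℝ) (ρ : S → A → ℝ → S → ℝ)
    (hρ_nonneg : ∀ s a r s', 0 ≤ ρ s a r s')
    (hρ_sum : ∀ s a, ∑ r ∈ R, ∑ s' : S, ρ s a r s' = 1)
    (γ : ℝ)
    (η : S → A → Measure ℝ)
    (hη_prob : ∀ s a, IsProbabilityMeasure (η s a))
    (hη_int : ∀ s a, Integrable (fun z : ℝ => z) (η s a))
    (Qη : S → A → ℝ)
    (hQη : ∀ s a, Qη s a = ∫ z, z ∂(η s a))
    (astar : S → A)
    (hastar : ∀ s', Qη s' (astar s') =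
      Finset.univ.sup' Finset.univ_nonempty (fun a' => Qη s' a'))
    (Tη : S → A → Measure ℝ)
    (hTη : ∀ s a, Tη s a = ∑ r ∈ R, ∑ s' : S,
      ENNReal.ofReal (ρ s a r s') •
        Measure.map (fun z => r + γ * z) (η s' (astar s'))) :
    (∀ s a, IsProbabilityMeasure (Tη s a)) ∧
    (∀ s a, Integrable (fun z : ℝ => z) (Tη s a)) ∧
    (∀ s a, ∫ z, z ∂(Tη s a) =
      ∑ r ∈ R, ∑ s' : S, ρ s a r s' *
        (r + γ * Finset.univ.sup' Finset.univ_nonempty (fun a' => Qη s' a'))) := by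
  set ν : ℝ × S → Measure ℝ := fun p => (η p.2 (astar p.2)).map fun z => p.1 + γ * z
  have hT : ∀ s a, Tη s a = ∑ p ∈ R ×ˢ Finset.univ, ENNReal.ofReal (ρ s a p.1 p.2) • ν p :=
    fun s a => by rw [hTη, ← Finset.sum_product']
  have hν_prob : ∀ p, IsProbabilityMeasure (ν p) :=
    fun p => Measure.isProbabilityMeasure_map (by fun_prop)
  have hν_int : ∀ p ∈ R ×ˢ Finset.univ, Integrable (fun z : ℝ => z) (ν p) :=
    fun p _ => integrable_id_map_affine _ _ _ (hη_int _ _)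
  refine ⟨fun s a => ?_, fun s a => ?_, fun s a => ?_⟩
  · rw [hT]
    exact isProbabilityMeasure_finsetSum_ofReal_smul _ _ _ (fun _ _ => hρ_nonneg _ _ _ _)
      (by rw [Finset.sum_product']; exact hρ_sum s a)
  · rw [hT]
    exact integrable_finsetSum_ofReal_smul _ _ _ hν_int
  · rw [hT, integral_finsetSum_ofReal_smul _ _ _ (fun _ _ => hρ_nonneg _ _ _ _) hν_int,
      ← Finset.sum_product']
    refine Finset.sum_congr rfl fun p _ => ?_
    rw [integral_id_map_affine _ _ _ (hη_int _ _), ← hQη, hastar, smul_eq_mul]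

/-- For a finite MDP, the distributional Bellman optimality operator `T*`
produces Borel probability measures on `ℝ` with finite first moments, and the induced
Q-function of `T* η` equals the Bellman optimality operator applied to `Q_η`. -/
theorem induced_Q_of_distributional_optimality_operator
    {S A : Type} [Fintype S] [Fintype A] [Nonempty S] [Nonempty A]
    (R : Finset ℝ) (ρ : S → A → ℝ → S → ℝ)
    (hρ_nonneg : ∀ s a r s', 0 ≤ ρ s a r s')
    (hρ_sum : ∀ s a, ∑ r ∈ R, ∑ s' : S, ρ s a r s' = 1)
    (γ : ℝ) (hγ : γ ∈ Set.Ioo (0 : ℝ) 1)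
    (η : S → A → Measure ℝ)
    (hη_prob : ∀ s a, IsProbabilityMeasure (η s a))
    (hη_int : ∀ s a, Integrable (fun z : ℝ => z) (η s a))
    (Qη : S → A → ℝ)
    (hQη : ∀ s a, Qη s a = ∫ z, z ∂(η s a))
    (astar : S → A)
    (hastar : ∀ s', Qη s' (astar s') =
      Finset.univ.sup' Finset.univ_nonempty (fun a' => Qη s' a'))
    (Tη : S → A → Measure ℝ)
    (hTη : ∀ s a, Tη s a = ∑ r ∈ R, ∑ s' : S,
      ENNReal.ofReal (ρ s a r s') •
        Measure.map (fun z => r + γ * z) (η s' (astar s'))) :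
    (∀ s a, IsProbabilityMeasure (Tη s a)) ∧
    (∀ s a, Integrable (fun z : ℝ => z) (Tη s a)) ∧
    (∀ s a, ∫ z, z ∂(Tη s a) =
      ∑ r ∈ R, ∑ s' : S, ρ s a r s' *
        (r + γ * Finset.univ.sup' Finset.univ_nonempty (fun a' => Qη s' a'))) :=
  induced_Q_of_distributional_optimality_operator_general R ρ hρ_nonneg hρ_sum γ η hη_prob hη_int Qη
    hQη astar hastar Tη hTη
end

section
/- Let M = (S, A, R, ρ) be a finite MDP with discount factor γ ∈ (0,1) and let η_0 be a distributional collection with finite first moments. Define iterates η_{k+1} := T*η_k, where at each step an arbitrary greedy selection for η_k is used. Then every η_k is a distributional collection with finite first moments, and the induced Q-functions Q_k := Q_{η_k} satisfy Q_{k+1} = 𝒯* Q_k for all k ≥ 0. -/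
/-!
Each `η (k + 1) s a` is a finite mixture, with weights `ρ s a r s'`, of pushforwards of the greedy
components `η k s' (astar k s')` along `z ↦ r + γ z`. Such a pushforward of a probability measure
with a first moment is again one, with mean `r + γ m`; a mixture with weights summing to one of such
measures is again one, with the weighted mean. Induction on `k` gives the moment claims, and the
greedy property replaces the mean of the selected component by the maximum over actions.
-/

open MeasureTheory

namespace MeasureTheory

section Mixture

variable {ι α : Type*} [MeasurableSpace α] {s : Finset ι} {w : ι → ℝ} {μ : ι → Measure α}

theorem isProbabilityMeasure_sum_ofReal_smul (hw_nonneg : ∀ i ∈ s, 0 ≤ w i)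
    (hw_sum : ∑ i ∈ s, w i = 1) (hμ : ∀ i ∈ s, IsProbabilityMeasure (μ i)) :
    IsProbabilityMeasure (∑ i ∈ s, ENNReal.ofReal (w i) • μ i) := by
  constructor
  calc (∑ i ∈ s, ENNReal.ofReal (w i) • μ i) Set.univ
      = ∑ i ∈ s, ENNReal.ofReal (w i) := by
        simp only [Measure.coe_finsetSum, Finset.sum_apply, Measure.smul_apply, smul_eq_mul]
        exact Finset.sum_congr rfl fun i hi => by rw [(hμ i hi).measure_univ, mul_one]
    _ = 1 := by rw [← ENNReal.ofReal_sum_of_nonneg hw_nonneg, hw_sum, ENNReal.ofReal_one]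

theorem integrable_sum_ofReal_smul {f : α → ℝ} (hf : ∀ i ∈ s, Integrable f (μ i)) :
    Integrable f (∑ i ∈ s, ENNReal.ofReal (w i) • μ i) :=
  integrable_finsetSum_measure.mpr fun i hi => (hf i hi).smul_measure ENNReal.ofReal_ne_top

theorem integral_sum_ofReal_smul {f : α → ℝ} (hw_nonneg : ∀ i ∈ s, 0 ≤ w i)
    (hf : ∀ i ∈ s, Integrable f (μ i)) :
    ∫ x, f x ∂(∑ i ∈ s, ENNReal.ofReal (w i) • μ i) = ∑ i ∈ s, w i * ∫ x, f x ∂(μ i) := by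
  rw [integral_finsetSum_measure fun i hi => (hf i hi).smul_measure ENNReal.ofReal_ne_top]
  refine Finset.sum_congr rfl fun i hi => ?_
  rw [integral_smul_measure, ENNReal.toReal_ofReal (hw_nonneg i hi), smul_eq_mul]

end Mixture

section AffinePushforward

variable {μ : Measure ℝ} (r γ : ℝ)

theorem measurable_affine : Measurable fun z : ℝ => r + γ * z :=
  measurable_const.add (measurable_id.const_mul γ)

theorem Integrable.id_map_affine [IsFiniteMeasure μ] (hμ : Integrable (fun z : ℝ => z) μ) :
    Integrable (fun z : ℝ => z) (μ.map fun z => r + γ * z) := by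
  rw [integrable_map_measure measurable_id'.aestronglyMeasurable
    (measurable_affine r γ).aemeasurable]
  exact (integrable_const r).add (hμ.const_mul γ)

theorem integral_id_map_affine [IsProbabilityMeasure μ] (hμ : Integrable (fun z : ℝ => z) μ) :
    ∫ z, z ∂(μ.map fun z => r + γ * z) = r + γ * ∫ z, z ∂μ := by
  rw [integral_map (measurable_affine r γ).aemeasurable measurable_id'.aestronglyMeasurable,
    integral_add (integrable_const r) (hμ.const_mul γ), integral_const, probReal_univ,
    one_smul, integral_const_mul]

end AffinePushforward

end MeasureTheory

theorem distributional_iterates_induce_bellman_iteration_general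
    {S A : Type} [Fintype S] [Fintype A] [Nonempty A]
    (R : Finset ℝ) (ρ : S → A → ℝ → S → ℝ)
    (hρ_nonneg : ∀ s a r s', 0 ≤ ρ s a r s')
    (hρ_sum : ∀ s a, ∑ r ∈ R, ∑ s' : S, ρ s a r s' = 1)
    (γ : ℝ)
    (η : ℕ → S → A → Measure ℝ)
    (hη0_prob : ∀ s a, IsProbabilityMeasure (η 0 s a))
    (hη0_int : ∀ s a, Integrable (fun z : ℝ => z) (η 0 s a))
    (astar : ℕ → S → A)
    (hgreedy : ∀ k s', (∫ z, z ∂(η k s' (astar k s'))) =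
      Finset.univ.sup' Finset.univ_nonempty (fun a' => ∫ z, z ∂(η k s' a')))
    (hstep : ∀ k s a, η (k + 1) s a = ∑ r ∈ R, ∑ s' : S,
      ENNReal.ofReal (ρ s a r s') •
        Measure.map (fun z => r + γ * z) (η k s' (astar k s'))) :
    (∀ k s a, IsProbabilityMeasure (η k s a)) ∧
    (∀ k s a, Integrable (fun z : ℝ => z) (η k s a)) ∧
    (∀ k s a, ∫ z, z ∂(η (k + 1) s a) =
      ∑ r ∈ R, ∑ s' : S, ρ s a r s' *
        (r + γ * Finset.univ.sup' Finset.univ_nonempty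
          (fun a' => ∫ z, z ∂(η k s' a')))) := by
  have hstep_pairs : ∀ k s a, η (k + 1) s a = ∑ x ∈ R ×ˢ Finset.univ,
      ENNReal.ofReal (ρ s a x.1 x.2) • (η k x.2 (astar k x.2)).map fun z => x.1 + γ * z :=
    fun k s a => by rw [hstep, Finset.sum_product]
  have hpush_integrable : ∀ k, (∀ s a, IsProbabilityMeasure (η k s a)) →
      (∀ s a, Integrable (fun z : ℝ => z) (η k s a)) → ∀ x ∈ R ×ˢ Finset.univ,
        Integrable (fun z : ℝ => z) ((η k x.2 (astar k x.2)).map fun z => x.1 + γ * z) :=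
    fun k hprob hinteg x _ =>
      have := hprob x.2 (astar k x.2)
      (hinteg x.2 (astar k x.2)).id_map_affine x.1 γ
  have hmoments : ∀ k, (∀ s a, IsProbabilityMeasure (η k s a)) ∧
      ∀ s a, Integrable (fun z : ℝ => z) (η k s a) := by
    intro k
    induction k with
    | zero => exact ⟨hη0_prob, hη0_int⟩
    | succ k ih =>
      obtain ⟨hprob, hinteg⟩ := ih
      refine ⟨fun s a => ?_, fun s a => ?_⟩ <;> rw [hstep_pairs]
      · refine isProbabilityMeasure_sum_ofReal_smul (fun x _ => hρ_nonneg s a x.1 x.2)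
          (by rw [Finset.sum_product, hρ_sum]) fun x _ => ?_
        exact Measure.isProbabilityMeasure_map (measurable_affine x.1 γ).aemeasurable
      · exact integrable_sum_ofReal_smul (hpush_integrable k hprob hinteg)
  refine ⟨fun k => (hmoments k).1, fun k => (hmoments k).2, fun k s a => ?_⟩
  obtain ⟨hprob, hinteg⟩ := hmoments k
  rw [hstep_pairs, integral_sum_ofReal_smul (fun x _ => hρ_nonneg s a x.1 x.2)
    (hpush_integrable k hprob hinteg), Finset.sum_product]
  refine Finset.sum_congr rfl fun r _ => Finset.sum_congr rfl fun s' _ => ?_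
  rw [integral_id_map_affine r γ (hinteg _ _), hgreedy]

/-- Iterates of the distributional Bellman optimality operator (with an
arbitrary greedy selection at each step) starting from a distributional collection with
finite first moments remain probability measures with finite first moments, and the
induced Q-functions satisfy the Bellman iteration `Q_{k+1} = 𝒯* Q_k`. -/
theorem distributional_iterates_induce_bellman_iteration
    {S A : Type} [Fintype S] [Fintype A] [Nonempty S] [Nonempty A]
    (R : Finset ℝ) (ρ : S → A → ℝ → S → ℝ)
    (hρ_nonneg : ∀ s a r s', 0 ≤ ρ s a r s')
    (hρ_sum : ∀ s a, ∑ r ∈ R, ∑ s' : S, ρ s a r s' = 1)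
    (γ : ℝ) (hγ : γ ∈ Set.Ioo (0 : ℝ) 1)
    (η : ℕ → S → A → Measure ℝ)
    (hη0_prob : ∀ s a, IsProbabilityMeasure (η 0 s a))
    (hη0_int : ∀ s a, Integrable (fun z : ℝ => z) (η 0 s a))
    (astar : ℕ → S → A)
    (hgreedy : ∀ k s', (∫ z, z ∂(η k s' (astar k s'))) =
      Finset.univ.sup' Finset.univ_nonempty (fun a' => ∫ z, z ∂(η k s' a')))
    (hstep : ∀ k s a, η (k + 1) s a = ∑ r ∈ R, ∑ s' : S,
      ENNReal.ofReal (ρ s a r s') •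
        Measure.map (fun z => r + γ * z) (η k s' (astar k s'))) :
    (∀ k s a, IsProbabilityMeasure (η k s a)) ∧
    (∀ k s a, Integrable (fun z : ℝ => z) (η k s a)) ∧
    (∀ k s a, ∫ z, z ∂(η (k + 1) s a) =
      ∑ r ∈ R, ∑ s' : S, ρ s a r s' *
        (r + γ * Finset.univ.sup' Finset.univ_nonempty
          (fun a' => ∫ z, z ∂(η k s' a')))) :=
  distributional_iterates_induce_bellman_iteration_general R ρ hρ_nonneg hρ_sum γ η hη0_prob hη0_int
    astar hgreedy hstep
end

section
/- Let h : ℝ → ℝ be an odd, strictly increasing bijection that is strictly concave on [0,∞). Then there exist a finite MDP M = (S, A, R, ρ) with discount factor γ ∈ (0,1), Q-functions Q_h and Q* : S×A → ℝ with 𝒯_h Q_h = Q_h and 𝒯* Q* = Q*, and a state s ∈ S such that the sets argmax_{a∈A} Q_h(s,a) and argmax_{a∈A} Q*(s,a) are disjoint; that is, the greedy policy induced by the fixed point of 𝒯_h does not agree at s with any action that is greedy for the optimal Q-function, so the fixed point of 𝒯_h does not yield an optimal policy. -/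
/-!
State `1` is absorbing with reward `0`. In state `0`, action `0` pays a sure reward `m` and
action `1` a fair lottery between `0` and `2`, both then moving to state `1`. Strict concavity
makes `h` risk averse: `(h 0 + h 2) / 2 < h 1`, so, `h` being a strictly increasing surjection,
some `m < 1` still has `(h 0 + h 2) / 2 < h m`. Then `𝒯_h` prefers the sure reward `m` while
`𝒯*` prefers the lottery, whose mean is `1`.
-/

open Function

theorem StrictConcaveOn.exists_lt_midpoint_and_avg_lt {h : ℝ → ℝ} {s : Set ℝ}
    (hconc : StrictConcaveOn ℝ s h) (hmono : StrictMono h) (hsurj : Surjective h)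
    {x y : ℝ} (hx : x ∈ s) (hy : y ∈ s) (hxy : x ≠ y) :
    ∃ m, m < (x + y) / 2 ∧ (h x + h y) / 2 < h m := by
  have havg : (h x + h y) / 2 < h ((x + y) / 2) := by
    have := hconc.2 hx hy hxy (by norm_num : (0 : ℝ) < 1 / 2) (by norm_num : (0 : ℝ) < 1 / 2)
      (by norm_num)
    simp only [smul_eq_mul, show 1 / 2 * x + 1 / 2 * y = (x + y) / 2 by ring] at this
    linarith
  obtain ⟨m, hm⟩ := hsurj (((h x + h y) / 2 + h ((x + y) / 2)) / 2)
  exact ⟨m, hmono.lt_iff_lt.mp (by linarith), by linarith⟩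

theorem Finset.apply_ne_sup'_of_lt {α β : Type*} [LinearOrder β] {s : Finset α}
    (hs : s.Nonempty) {f : α → β} {a b : α} (hb : b ∈ s) (hab : f a < f b) :
    f a ≠ s.sup' hs f :=
  (hab.trans_le (s.le_sup' f hb)).ne

namespace LotteryMDP

noncomputable def kernel (m : ℝ) (s a : Fin 2) (r : ℝ) (s' : Fin 2) : ℝ :=
  if s' = 1 then
    if s = 0 then
      if a = 0 then (if r = m then 1 else 0)
      else (if r = 0 then 1 / 2 else 0) + (if r = 2 then 1 / 2 else 0)
    else if r = 0 then 1 else 0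
  else 0

theorem kernel_nonneg (m : ℝ) (s a : Fin 2) (r : ℝ) (s' : Fin 2) : 0 ≤ kernel m s a r s' := by
  unfold kernel
  split_ifs <;> norm_num

theorem sum_kernel_mul {m : ℝ} (hm0 : m ≠ 0) (hm2 : m ≠ 2) (s a : Fin 2)
    (g : ℝ → Fin 2 → ℝ) :
    ∑ r ∈ {0, 2, m}, ∑ s', kernel m s a r s' * g r s' =
      if s = 0 then (if a = 0 then g m 1 else (g 0 1 + g 2 1) / 2) else g 0 1 := by
  rw [Finset.sum_insert (by simp [hm0.symm]), Finset.sum_insert (by simp [hm2.symm]),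
    Finset.sum_singleton]
  fin_cases s <;> fin_cases a <;> simp [kernel, hm0, hm2, hm0.symm, hm2.symm]; ring

theorem sum_kernel {m : ℝ} (hm0 : m ≠ 0) (hm2 : m ≠ 2) (s a : Fin 2) :
    ∑ r ∈ {0, 2, m}, ∑ s', kernel m s a r s' = 1 := by
  simpa using sum_kernel_mul hm0 hm2 s a fun _ _ => 1

noncomputable def transformedQ (h : ℝ → ℝ) (m : ℝ) (s a : Fin 2) : ℝ :=
  if s = 0 then (if a = 0 then h m else (h 0 + h 2) / 2) else h 0

def optimalQ (m : ℝ) (s a : Fin 2) : ℝ :=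
  if s = 0 then (if a = 0 then m else 1) else 0

theorem transformedQ_eq_sum {h : ℝ → ℝ} (hinj : Injective h) {m : ℝ} (hm0 : m ≠ 0)
    (hm2 : m ≠ 2) (γ : ℝ) (s a : Fin 2) :
    transformedQ h m s a = ∑ r ∈ {0, 2, m}, ∑ s', kernel m s a r s' *
      h (r + γ * Finset.univ.sup' Finset.univ_nonempty
        fun a' => invFun h (transformedQ h m s' a')) := by
  have hinv : invFun h (h 0) = 0 := leftInverse_invFun hinj 0
  rw [sum_kernel_mul hm0 hm2]
  fin_cases s <;> fin_cases a <;> simp [transformedQ, hinv]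

theorem optimalQ_eq_sum {m : ℝ} (hm0 : m ≠ 0) (hm2 : m ≠ 2) (γ : ℝ) (s a : Fin 2) :
    optimalQ m s a = ∑ r ∈ {0, 2, m}, ∑ s', kernel m s a r s' *
      (r + γ * Finset.univ.sup' Finset.univ_nonempty fun a' => optimalQ m s' a') := by
  rw [sum_kernel_mul hm0 hm2]
  fin_cases s <;> fin_cases a <;> simp [optimalQ]

end LotteryMDP

theorem transformed_operator_fixed_point_not_optimal_general
    (h : ℝ → ℝ)
    (hmono : StrictMono h)
    (hbij : Function.Bijective h)
    (hconc : StrictConcaveOn ℝ (Set.Ici 0) h) :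
    ∃ (nS nA : ℕ) (R : Finset ℝ)
      (ρ : Fin (nS + 1) → Fin (nA + 1) → ℝ → Fin (nS + 1) → ℝ)
      (γ : ℝ) (Qh Qstar : Fin (nS + 1) → Fin (nA + 1) → ℝ) (s : Fin (nS + 1)),
      γ ∈ Set.Ioo (0 : ℝ) 1 ∧
      (∀ s a r s', 0 ≤ ρ s a r s') ∧
      (∀ s a, ∑ r ∈ R, ∑ s', ρ s a r s' = 1) ∧
      -- `Qh` is a fixed point of the transformed operator `𝒯_h`
      (∀ s a, Qh s a = ∑ r ∈ R, ∑ s', ρ s a r s' *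
        h (r + γ * Finset.univ.sup' Finset.univ_nonempty
            (fun a' => Function.invFun h (Qh s' a')))) ∧
      -- `Qstar` is a fixed point of the Bellman optimality operator `𝒯*`
      (∀ s a, Qstar s a = ∑ r ∈ R, ∑ s', ρ s a r s' *
        (r + γ * Finset.univ.sup' Finset.univ_nonempty (fun a' => Qstar s' a'))) ∧
      -- at state `s`, no `𝒯_h`-greedy action is optimal
      Disjoint {a | Qh s a = Finset.univ.sup' Finset.univ_nonempty (Qh s)}
        {a | Qstar s a = Finset.univ.sup' Finset.univ_nonempty (Qstar s)} := by
  obtain ⟨m, hm1, hhm⟩ := hconc.exists_lt_midpoint_and_avg_lt hmono hbij.surjective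
    Set.self_mem_Ici (by norm_num : (0 : ℝ) ≤ 2) (by norm_num)
  norm_num at hm1
  have hm0 : m ≠ 0 := by
    rintro rfl
    linarith [hmono (by norm_num : (0 : ℝ) < 2)]
  have hm2 : m ≠ 2 := by linarith
  refine ⟨1, 1, {0, 2, m}, LotteryMDP.kernel m, 1 / 2, LotteryMDP.transformedQ h m,
    LotteryMDP.optimalQ m, 0, by norm_num, LotteryMDP.kernel_nonneg m,
    LotteryMDP.sum_kernel hm0 hm2, LotteryMDP.transformedQ_eq_sum hmono.injective hm0 hm2 _,
    LotteryMDP.optimalQ_eq_sum hm0 hm2 _, Set.disjoint_left.2 fun a hh hstar => ?_⟩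
  fin_cases a
  · refine Finset.apply_ne_sup'_of_lt _ (Finset.mem_univ (1 : Fin 2)) ?_ hstar
    simpa [LotteryMDP.optimalQ] using hm1
  · refine Finset.apply_ne_sup'_of_lt _ (Finset.mem_univ (0 : Fin 2)) ?_ hh
    simpa [LotteryMDP.transformedQ] using hhm

/-- For any odd, strictly increasing bijection `h : ℝ → ℝ` that is strictly
concave on `[0,∞)`, there exists a finite MDP (with nonempty finite state and action spaces,
a finite reward set `R ⊆ ℝ`, transition kernel `ρ`, and discount `γ ∈ (0,1)`), Q-functions
`Qh` and `Qstar` that are fixed points of the transformed operator `𝒯_h` and of the Bellman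
optimality operator `𝒯*` respectively, and a state `s` where the argmax sets of `Qh s` and
`Qstar s` are disjoint: the fixed point of `𝒯_h` does not yield an optimal policy. -/
theorem transformed_operator_fixed_point_not_optimal
    (h : ℝ → ℝ)
    (hodd : ∀ x, h (-x) = -h x)
    (hmono : StrictMono h)
    (hbij : Function.Bijective h)
    (hconc : StrictConcaveOn ℝ (Set.Ici 0) h) :
    ∃ (nS nA : ℕ) (R : Finset ℝ)
      (ρ : Fin (nS + 1) → Fin (nA + 1) → ℝ → Fin (nS + 1) → ℝ)
      (γ : ℝ) (Qh Qstar : Fin (nS + 1) → Fin (nA + 1) → ℝ) (s : Fin (nS + 1)),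
      γ ∈ Set.Ioo (0 : ℝ) 1 ∧
      (∀ s a r s', 0 ≤ ρ s a r s') ∧
      (∀ s a, ∑ r ∈ R, ∑ s', ρ s a r s' = 1) ∧
      -- `Qh` is a fixed point of the transformed operator `𝒯_h`
      (∀ s a, Qh s a = ∑ r ∈ R, ∑ s', ρ s a r s' *
        h (r + γ * Finset.univ.sup' Finset.univ_nonempty
            (fun a' => Function.invFun h (Qh s' a')))) ∧
      -- `Qstar` is a fixed point of the Bellman optimality operator `𝒯*`
      (∀ s a, Qstar s a = ∑ r ∈ R, ∑ s', ρ s a r s' *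
        (r + γ * Finset.univ.sup' Finset.univ_nonempty (fun a' => Qstar s' a'))) ∧
      -- at state `s`, no `𝒯_h`-greedy action is optimal
      Disjoint {a | Qh s a = Finset.univ.sup' Finset.univ_nonempty (Qh s)}
        {a | Qstar s a = Finset.univ.sup' Finset.univ_nonempty (Qstar s)} :=
  transformed_operator_fixed_point_not_optimal_general h hmono hbij hconc
end

section
/- Let M = (S, A, R, ρ) be a finite MDP with discount factor γ ∈ (0,1), let J ⊆ ℝ be an open interval and φ : ℝ → J a homeomorphism. Let ξ_0 be a conjugate collection all of whose measures have support contained in a fixed closed bounded interval I ⊂ J. Define iterates ξ_k := T_φ ξ_{k−1}, where at each step an arbitrary greedy selection for ξ_{k−1} is used. Then every ξ_k is a well-defined conjugate collection (in particular φ⁻¹ is integrable with respect to each of its measures), and the Q-functions Q_k(s,a) := ∫_J φ⁻¹(w) dξ_k^{(s,a)}(w) satisfy the Bellman iteration Q_k = 𝒯* Q_{k−1} for all k ≥ 1. -/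
/-! Since `φ⁻¹ ∘ g_r = f_{r,γ} ∘ φ⁻¹`, pushing a measure `ν` forward by `g_r` changes
`∫ φ⁻¹ dν` into `r + γ ∫ φ⁻¹ dν`, and `g_r#ν` again lives on `range φ = J` with `φ⁻¹`
integrable. Finite mixtures with probability weights preserve these properties and have the
mixture of the integrals as integral, so by induction on `k` every `ξ_k` is a conjugate collection;
the greedy choice turns `∫ φ⁻¹ dξ_k^{(s', a*(s'))}` into `max_{a'} Q_k(s', a')`. -/

open MeasureTheory

namespace MeasureTheory

theorem integral_finsetSum_ofReal_smul_measure {α ι : Type*} [MeasurableSpace α]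
    {f : α → ℝ} {I : Finset ι} {p : ι → ℝ} {ν : ι → Measure α}
    (hp : ∀ i ∈ I, 0 ≤ p i) (hf : ∀ i ∈ I, Integrable f (ν i)) :
    ∫ x, f x ∂(∑ i ∈ I, ENNReal.ofReal (p i) • ν i) = ∑ i ∈ I, p i * ∫ x, f x ∂ν i := by
  rw [integral_finsetSum_measure fun i hi => (hf i hi).smul_measure ENNReal.ofReal_ne_top]
  refine Finset.sum_congr rfl fun i hi => ?_
  rw [integral_smul_measure, ENNReal.toReal_ofReal (hp i hi), smul_eq_mul]

theorem map_apply_compl_eq_zero_of_forall_mem {α β : Type*} [MeasurableSpace α]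
    [MeasurableSpace β] {J : Set β} (hJ : MeasurableSet J) {g : α → β} (hg : ∀ x, g x ∈ J)
    (μ : Measure α) : μ.map g Jᶜ = 0 := by
  by_cases hgm : AEMeasurable g μ
  · rw [Measure.map_apply_of_aemeasurable hgm hJ.compl, Set.preimage_eq_empty
      (Set.disjoint_compl_left_iff_subset.2 (Set.range_subset_iff.2 hg)), measure_empty]
  · rw [Measure.map_of_not_aemeasurable hgm, Measure.coe_zero, Pi.zero_apply]

theorem ContinuousOn.aemeasurable_of_measure_compl_eq_zero {α β : Type*} [MeasurableSpace α]
    [TopologicalSpace α] [OpensMeasurableSpace α] [MeasurableSpace β] [TopologicalSpace β]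
    [BorelSpace β] {f : α → β} {J : Set α} {μ : Measure α} (hf : ContinuousOn f J)
    (hJ : MeasurableSet J) (hμJ : μ Jᶜ = 0) : AEMeasurable f μ := by
  simpa only [Measure.restrict_eq_self_of_ae_mem (ae_iff.2 hμJ)] using
    hf.aemeasurable (μ := μ) hJ

/-- A member `ξ^{(s,a)}` of a conjugate collection, with `ψ = φ⁻¹`, modelled as a measure on the
ambient space concentrated on `J`. -/
structure IsConjugateMeasure {α : Type*} [MeasurableSpace α] (J : Set α) (ψ : α → ℝ)
    (ν : Measure α) : Prop where
  isProbabilityMeasure : IsProbabilityMeasure ν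
  measure_compl : ν Jᶜ = 0
  integrable : Integrable ψ ν

namespace IsConjugateMeasure

variable {α : Type*} [MeasurableSpace α] {J : Set α} {ψ : α → ℝ} {ν : Measure α}

theorem restrict_eq (h : IsConjugateMeasure J ψ ν) : ν.restrict J = ν :=
  Measure.restrict_eq_self_of_ae_mem (ae_iff.2 h.measure_compl)

theorem setIntegral_eq (h : IsConjugateMeasure J ψ ν) : ∫ x in J, ψ x ∂ν = ∫ x, ψ x ∂ν := by
  rw [h.restrict_eq]

theorem of_integrableOn [IsProbabilityMeasure ν] (hJ : ν Jᶜ = 0) (hψ : IntegrableOn ψ J ν) :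
    IsConjugateMeasure J ψ ν := by
  refine ⟨‹_›, hJ, ?_⟩
  rwa [IntegrableOn, Measure.restrict_eq_self_of_ae_mem (ae_iff.2 hJ)] at hψ

theorem finsetSum {ι : Type*} {I : Finset ι} {p : ι → ℝ} {ν : ι → Measure α}
    (hp : ∀ i ∈ I, 0 ≤ p i) (hp_sum : ∑ i ∈ I, p i = 1)
    (hν : ∀ i ∈ I, IsConjugateMeasure J ψ (ν i)) :
    IsConjugateMeasure J ψ (∑ i ∈ I, ENNReal.ofReal (p i) • ν i) where
  isProbabilityMeasure := by
    constructor
    calc (∑ i ∈ I, ENNReal.ofReal (p i) • ν i) Set.univ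
        = ∑ i ∈ I, ENNReal.ofReal (p i) := by
          rw [Measure.finsetSum_apply]
          refine Finset.sum_congr rfl fun i hi => ?_
          have := (hν i hi).isProbabilityMeasure
          rw [Measure.smul_apply, measure_univ, smul_eq_mul, mul_one]
      _ = 1 := by rw [← ENNReal.ofReal_sum_of_nonneg hp, hp_sum, ENNReal.ofReal_one]
  measure_compl := by
    rw [Measure.finsetSum_apply]
    exact Finset.sum_eq_zero fun i hi => by
      rw [Measure.smul_apply, (hν i hi).measure_compl, smul_zero]
  integrable := integrable_finsetSum_measure.2 fun i hi =>
    (hν i hi).integrable.smul_measure ENNReal.ofReal_ne_top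

section Conjugation

variable {J : Set ℝ} {φ φinv : ℝ → ℝ} {ν : Measure ℝ}

theorem map_conj (h : IsConjugateMeasure J φinv ν) (hJ : MeasurableSet J) (hφ : Measurable φ)
    (hφJ : ∀ x, φ x ∈ J) (hleft : ∀ x, φinv (φ x) = x) (hφinv : ContinuousOn φinv J)
    (r γ : ℝ) : IsConjugateMeasure J φinv (ν.map fun w => φ (r + γ * φinv w)) := by
  have := h.isProbabilityMeasure
  have hφinv_ae := hφinv.aemeasurable_of_measure_compl_eq_zero hJ h.measure_compl
  have hg : AEMeasurable (fun w => φ (r + γ * φinv w)) ν := by fun_prop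
  have hmap_compl := map_apply_compl_eq_zero_of_forall_mem hJ (fun w => hφJ (r + γ * φinv w)) ν
  refine ⟨Measure.isProbabilityMeasure_map hg, hmap_compl, ?_⟩
  rw [integrable_map_measure
    (hφinv.aemeasurable_of_measure_compl_eq_zero hJ hmap_compl).aestronglyMeasurable hg]
  simp only [Function.comp_def, hleft]
  exact (integrable_const r).add (h.integrable.const_mul γ)

theorem integral_map_conj (h : IsConjugateMeasure J φinv ν) (hJ : MeasurableSet J)
    (hφ : Measurable φ) (hφJ : ∀ x, φ x ∈ J) (hleft : ∀ x, φinv (φ x) = x)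
    (hφinv : ContinuousOn φinv J) (r γ : ℝ) :
    ∫ w, φinv w ∂(ν.map fun w => φ (r + γ * φinv w)) = r + γ * ∫ w, φinv w ∂ν := by
  have := h.isProbabilityMeasure
  have hg : AEMeasurable (fun w => φ (r + γ * φinv w)) ν := by
    have := hφinv.aemeasurable_of_measure_compl_eq_zero hJ h.measure_compl
    fun_prop
  rw [integral_map hg (h.map_conj hJ hφ hφJ hleft hφinv r γ).integrable.aestronglyMeasurable]
  simp only [hleft]
  rw [integral_add (integrable_const r) (h.integrable.const_mul γ), integral_const,
    integral_const_mul, probReal_univ, one_smul]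

end Conjugation

end IsConjugateMeasure

end MeasureTheory

theorem conjugated_operator_iterates_bellman_general
    {S A : Type} [Fintype S] [Fintype A] [Nonempty A]
    (R : Finset ℝ) (ρ : S → A → ℝ → S → ℝ)
    (hρ_nonneg : ∀ s a r s', 0 ≤ ρ s a r s')
    (hρ_sum : ∀ s a, ∑ r ∈ R, ∑ s' : S, ρ s a r s' = 1)
    (γ : ℝ)
    (J : Set ℝ) (hJopen : IsOpen J)
    (φ φinv : ℝ → ℝ)
    (hφcont : Continuous φ) (hφrange : Set.range φ = J)
    (hleft : ∀ x, φinv (φ x) = x)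
    (hφinvcont : ContinuousOn φinv J)
    (ξ : ℕ → S → A → Measure ℝ)
    (hξ0_prob : ∀ s a, IsProbabilityMeasure (ξ 0 s a))
    (c d : ℝ) (hIJ : Set.Icc c d ⊆ J)
    (hξ0_supp : ∀ s a, ξ 0 s a (Set.Icc c d)ᶜ = 0)
    (hξ0_int : ∀ s a, IntegrableOn φinv J (ξ 0 s a))
    (astar : ℕ → S → A)
    (hgreedy : ∀ k s', (∫ w in J, φinv w ∂(ξ k s' (astar k s'))) =
      Finset.univ.sup' Finset.univ_nonempty
        (fun a' => ∫ w in J, φinv w ∂(ξ k s' a')))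
    (hstep : ∀ k s a, ξ (k + 1) s a = ∑ r ∈ R, ∑ s' : S,
      ENNReal.ofReal (ρ s a r s') •
        Measure.map (fun w => φ (r + γ * φinv w)) (ξ k s' (astar k s'))) :
    (∀ k s a, IsProbabilityMeasure (ξ k s a)) ∧
    (∀ k s a, ξ k s a Jᶜ = 0) ∧
    (∀ k s a, IntegrableOn φinv J (ξ k s a)) ∧
    (∀ k s a, (∫ w in J, φinv w ∂(ξ (k + 1) s a)) =
      ∑ r ∈ R, ∑ s' : S, ρ s a r s' *
        (r + γ * Finset.univ.sup' Finset.univ_nonempty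
          (fun a' => ∫ w in J, φinv w ∂(ξ k s' a')))) := by
  have hJ := hJopen.measurableSet
  have hφ := hφcont.measurable
  have hφJ (x : ℝ) : φ x ∈ J := hφrange ▸ Set.mem_range_self x
  have hstep_product (k s a) : ξ (k + 1) s a =
      ∑ i ∈ R ×ˢ Finset.univ, ENNReal.ofReal (ρ s a i.1 i.2) •
        Measure.map (fun w => φ (i.1 + γ * φinv w)) (ξ k i.2 (astar k i.2)) := by
    rw [hstep, Finset.sum_product]
  have hconj (k) : ∀ s a, IsConjugateMeasure J φinv (ξ k s a) := by
    induction k with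
    | zero =>
      intro s a
      have := hξ0_prob s a
      exact .of_integrableOn (measure_mono_null (Set.compl_subset_compl.2 hIJ) (hξ0_supp s a))
        (hξ0_int s a)
    | succ k ih =>
      intro s a
      rw [hstep_product]
      exact .finsetSum (fun i _ => hρ_nonneg s a i.1 i.2) (by rw [Finset.sum_product, hρ_sum])
        fun i _ => (ih i.2 _).map_conj hJ hφ hφJ hleft hφinvcont i.1 γ
  refine ⟨fun k s a => (hconj k s a).isProbabilityMeasure,
    fun k s a => (hconj k s a).measure_compl, fun k s a => (hconj k s a).integrable.integrableOn,
    fun k s a => ?_⟩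
  rw [(hconj _ s a).setIntegral_eq, hstep_product, integral_finsetSum_ofReal_smul_measure
    (fun i _ => hρ_nonneg s a i.1 i.2)
    fun i _ => ((hconj k _ _).map_conj hJ hφ hφJ hleft hφinvcont i.1 γ).integrable,
    Finset.sum_product]
  refine Finset.sum_congr rfl fun r _ => Finset.sum_congr rfl fun s' _ => ?_
  rw [(hconj k s' _).integral_map_conj hJ hφ hφJ hleft hφinvcont, ← hgreedy,
    (hconj k s' _).setIntegral_eq]

/-- Let `φ : ℝ → J` be a homeomorphism onto an open interval `J ⊆ ℝ`
(modelled by `φ : ℝ → ℝ` continuous with range `J`, `J` open and order-connected, with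
inverse `φinv` continuous on `J`). Starting from a conjugate collection `ξ 0` of probability
measures supported in a closed bounded interval `[c,d] ⊆ J` (with `φinv` integrable), the
iterates `ξ (k+1) = T_φ (ξ k)` of the conjugated distributional optimality operator (with an
arbitrary greedy selection at each step) remain well-defined conjugate collections --
probability measures concentrated on `J` with `φinv` integrable -- and the Q-functions
`Q_k(s,a) = ∫_J φ⁻¹ dξ_k^{(s,a)}` satisfy the Bellman iteration `Q_{k+1} = 𝒯* Q_k`. -/
theorem conjugated_operator_iterates_bellman
    {S A : Type} [Fintype S] [Fintype A] [Nonempty S] [Nonempty A]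
    (R : Finset ℝ) (ρ : S → A → ℝ → S → ℝ)
    (hρ_nonneg : ∀ s a r s', 0 ≤ ρ s a r s')
    (hρ_sum : ∀ s a, ∑ r ∈ R, ∑ s' : S, ρ s a r s' = 1)
    (γ : ℝ) (hγ : γ ∈ Set.Ioo (0 : ℝ) 1)
    (J : Set ℝ) (hJopen : IsOpen J) (hJconn : J.OrdConnected)
    (φ φinv : ℝ → ℝ)
    (hφcont : Continuous φ) (hφrange : Set.range φ = J)
    (hleft : ∀ x, φinv (φ x) = x) (hright : ∀ w ∈ J, φ (φinv w) = w)
    (hφinvcont : ContinuousOn φinv J)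
    (ξ : ℕ → S → A → Measure ℝ)
    (hξ0_prob : ∀ s a, IsProbabilityMeasure (ξ 0 s a))
    (c d : ℝ) (hIJ : Set.Icc c d ⊆ J)
    (hξ0_supp : ∀ s a, ξ 0 s a (Set.Icc c d)ᶜ = 0)
    (hξ0_int : ∀ s a, IntegrableOn φinv J (ξ 0 s a))
    (astar : ℕ → S → A)
    (hgreedy : ∀ k s', (∫ w in J, φinv w ∂(ξ k s' (astar k s'))) =
      Finset.univ.sup' Finset.univ_nonempty
        (fun a' => ∫ w in J, φinv w ∂(ξ k s' a')))
    (hstep : ∀ k s a, ξ (k + 1) s a = ∑ r ∈ R, ∑ s' : S,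
      ENNReal.ofReal (ρ s a r s') •
        Measure.map (fun w => φ (r + γ * φinv w)) (ξ k s' (astar k s'))) :
    (∀ k s a, IsProbabilityMeasure (ξ k s a)) ∧
    (∀ k s a, ξ k s a Jᶜ = 0) ∧
    (∀ k s a, IntegrableOn φinv J (ξ k s a)) ∧
    (∀ k s a, (∫ w in J, φinv w ∂(ξ (k + 1) s a)) =
      ∑ r ∈ R, ∑ s' : S, ρ s a r s' *
        (r + γ * Finset.univ.sup' Finset.univ_nonempty
          (fun a' => ∫ w in J, φinv w ∂(ξ k s' a')))) :=
  conjugated_operator_iterates_bellman_general R ρ hρ_nonneg hρ_sum γ J hJopen φ φinv hφcont hφrange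
    hleft hφinvcont ξ hξ0_prob c d hIJ hξ0_supp hξ0_int astar hgreedy hstep
end
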